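/- The function ϱ : Ω_∞ × Ω_∞ → [0,∞) defined by ϱ((t,x),(s,y)) = |t−s|^{1/(2−α)} + min{ |x−y|, |x−y|^{2/(2−α)} min{x_d, y_d}^{−α/(2−α)} } is a quasi-metric on Ω_∞: there exists a constant K_1 = K_1(d,α) > 0 such that ϱ((t,x),(s,y)) ≤ K_1 ( ϱ((t,x),(t̂,x̂)) + ϱ((t̂,x̂),(s,y)) ) for any (t,x), (s,y), (t̂,x̂) ∈ Ω_∞, and ϱ((t,x),(s,y)) = 0 if and only if (t,x) = (s,y). -/

import Mathlib

open MeasureTheory Set Real Filter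
open scoped ENNReal NNReal BigOperators

noncomputable section

/-- Spatial variable: Euclidean space of dimension `d`. -/
abbrev Spc (d : ℕ) := EuclideanSpace ℝ (Fin d)

/-- Space-time point: `(t, x)`. -/
abbrev Pt (d : ℕ) := ℝ × Spc d

/-- Last spatial coordinate `x_d`. -/
def lastc (d : ℕ) (hd : 0 < d) (x : Spc d) : ℝ := x ⟨d - 1, by omega⟩

/-- `x_d` of a space-time point. -/
def xdOf (d : ℕ) (hd : 0 < d) (z : Pt d) : ℝ := lastc d hd z.2

/-- The index of the last coordinate. -/
def lastIdx (d : ℕ) (hd : 0 < d) : Fin d := ⟨d - 1, by omega⟩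

/-- Space-time upper half space `Ω_T = (−∞,T) × ℝ^d_+`, with `T ∈ (−∞,∞]` an extended real. -/
def OmegaT (d : ℕ) (hd : 0 < d) (T : EReal) : Set (Pt d) :=
  {z | (z.1 : EReal) < T ∧ 0 < xdOf d hd z}

/-- Test functions: smooth, compactly supported, with support inside `Ω`. -/
def IsTest (d : ℕ) (Ω : Set (Pt d)) (φ : Pt d → ℝ) : Prop :=
  ContDiff ℝ (⊤ : ℕ∞) φ ∧ HasCompactSupport φ ∧ tsupport φ ⊆ Ω

/-- Spatial partial derivative `D_i f` of a space-time function. -/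
def pderiv' (d : ℕ) {E : Type} [NormedAddCommGroup E] [NormedSpace ℝ E] (i : Fin d)
    (f : Pt d → E) (z : Pt d) : E :=
  fderiv ℝ (fun y => f (z.1, y)) z.2 (EuclideanSpace.single i 1)

/-- Time derivative `∂_t f` of a space-time function. -/
def tderiv' (d : ℕ) {E : Type} [NormedAddCommGroup E] [NormedSpace ℝ E]
    (f : Pt d → E) (z : Pt d) : E :=
  deriv (fun s => f (s, z.2)) z.1

/-- Iterated time derivative `∂_t^n f`. -/
def tderivIter (d : ℕ) {E : Type} [NormedAddCommGroup E] [NormedSpace ℝ E] :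
    ℕ → (Pt d → E) → Pt d → E
  | 0, f => f
  | n + 1, f => tderiv' d (tderivIter d n f)

/-- The (classical) spatial gradient of a space-time function, as a Euclidean vector. -/
def sgrad (d : ℕ) (f : Pt d → ℝ) (z : Pt d) : Spc d :=
  (WithLp.equiv 2 (Fin d → ℝ)).symm fun i => pderiv' d i f z

/-- The tangential part `(ξ_1, …, ξ_{d−1}, 0)` of a vector, i.e. `D_{x'}`-part. -/
def tangPart (d : ℕ) (ξ : Spc d) : Spc d :=
  (WithLp.equiv 2 (Fin d → ℝ)).symm fun i => if (i : ℕ) < d - 1 then ξ i else 0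

/-- `Du` is the spatial weak gradient of `u` on `Ω`. -/
def HasWeakGrad (d : ℕ) (Ω : Set (Pt d)) (u : Pt d → ℝ) (Du : Pt d → Spc d) : Prop :=
  ∀ i : Fin d, ∀ φ : Pt d → ℝ, IsTest d Ω φ →
    ∫ z : Pt d, u z * pderiv' d i φ z = -∫ z : Pt d, Du z i * φ z

/-- Uniform ellipticity and boundedness of a constant matrix, with ellipticity constant `ν`. -/
def EllipticAt (d : ℕ) (ν : ℝ) (A : Fin d → Fin d → ℝ) : Prop :=
  (∀ ξ : Spc d, ν * ‖ξ‖ ^ 2 ≤ ∑ i, ∑ j, A i j * ξ i * ξ j) ∧ ∀ i j, |A i j| ≤ ν⁻¹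

/-- Degeneracy condition `ν ≤ μ(s)/s^α ≤ ν⁻¹` for `s` in a set `S ⊆ ℝ_+`. -/
def MuCondOn (ν α : ℝ) (μ : ℝ → ℝ) (S : Set ℝ) : Prop :=
  ∀ s ∈ S, ν ≤ μ s / s ^ α ∧ μ s / s ^ α ≤ ν⁻¹

/-- `u` (with weak gradient `Du`) is a weak solution of
`u_t + λ c₀ u − μ(x_d) D_i (a_{ij} D_j u + F_i) = f` in `Ω`,
in the sense of Definition 2.1 (all derivatives moved onto the test function or realized by `Du`). -/
def IsWeakSol (d : ℕ) (hd : 0 < d) (Ω : Set (Pt d)) (μ : ℝ → ℝ)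
    (c0 : Pt d → ℝ) (a : Fin d → Fin d → Pt d → ℝ) (lam : ℝ)
    (F : Pt d → Spc d) (f : Pt d → ℝ) (u : Pt d → ℝ) (Du : Pt d → Spc d) : Prop :=
  ∀ φ : Pt d → ℝ, IsTest d Ω φ →
    (∫ z in Ω, (μ (xdOf d hd z))⁻¹ * (-(u z) * tderiv' d φ z + lam * c0 z * u z * φ z))
      + (∫ z in Ω, ∑ i, ((∑ j, a i j z * Du z j) + F z i) * pderiv' d i φ z)
      = ∫ z in Ω, (μ (xdOf d hd z))⁻¹ * f z * φ z

/-- The weight `x_d^{−α/2}`. -/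
def wtm (d : ℕ) (hd : 0 < d) (α : ℝ) (z : Pt d) : ℝ := xdOf d hd z ^ (-(α / 2))

/-- Membership in the weighted Sobolev space `W^1_p` w.r.t. a measure `m`:
`u x_d^{−α/2} ∈ L_p(m)` and `Du ∈ L_p(m)`. -/
def MemW1 (d : ℕ) (hd : 0 < d) (α : ℝ) (p : ℝ≥0∞) (m : Measure (Pt d))
    (u : Pt d → ℝ) (Du : Pt d → Spc d) : Prop :=
  MemLp (fun z => u z * wtm d hd α z) p m ∧ MemLp Du p m

/-- `v` vanishes near the boundary `{x_d = 0}`. -/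
def VanishNearBdry (d : ℕ) (hd : 0 < d) (v : Pt d → ℝ) : Prop :=
  ∃ c > 0, ∀ z : Pt d, xdOf d hd z < c → v z = 0

/-- The `W^1_p(m)` distance between `(u, Du)` and `(v, Dv)`. -/
def W1Dist (d : ℕ) (hd : 0 < d) (α : ℝ) (p : ℝ≥0∞) (m : Measure (Pt d))
    (u v : Pt d → ℝ) (Du Dv : Pt d → Spc d) : ℝ≥0∞ :=
  eLpNorm (fun z => (u z - v z) * wtm d hd α z) p m
    + eLpNorm (fun z => Du z - Dv z) p m

/-- `u ∈ 𝔚^1_p`: approximable in `W^1_p(m)` by smooth compactly supported functions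
vanishing near `{x_d = 0}`. -/
def ApproxBC (d : ℕ) (hd : 0 < d) (α : ℝ) (p : ℝ≥0∞) (m : Measure (Pt d))
    (u : Pt d → ℝ) (Du : Pt d → Spc d) : Prop :=
  ∀ ε : ℝ, 0 < ε → ∃ v : Pt d → ℝ, ContDiff ℝ (⊤ : ℕ∞) v ∧ HasCompactSupport v ∧
    VanishNearBdry d hd v ∧
    W1Dist d hd α p m u v Du (sgrad d v) < ENNReal.ofReal ε

/-- Approximability by smooth compactly supported functions (no boundary condition). -/
def ApproxI (d : ℕ) (hd : 0 < d) (α : ℝ) (p : ℝ≥0∞) (m : Measure (Pt d))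
    (u : Pt d → ℝ) (Du : Pt d → Spc d) : Prop :=
  ∀ ε : ℝ, 0 < ε → ∃ v : Pt d → ℝ, ContDiff ℝ (⊤ : ℕ∞) v ∧ HasCompactSupport v ∧
    W1Dist d hd α p m u v Du (sgrad d v) < ENNReal.ofReal ε

/-- `u_t ∈ ℍ^{−1}_p`: there are `G ∈ L_p(m)^d`, `g₁ x_d^{1−α}, g₂ x_d^{−α/2} ∈ L_p(m)` with
`u_t = μ(x_d) D_i G_i + g₁ + g₂` weakly on `Ω` (after division by `μ`). -/
def MemHm1 (d : ℕ) (hd : 0 < d) (α : ℝ) (p : ℝ≥0∞) (Ω : Set (Pt d)) (m : Measure (Pt d))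
    (μ : ℝ → ℝ) (u : Pt d → ℝ) : Prop :=
  ∃ G : Pt d → Spc d, ∃ g1 g2 : Pt d → ℝ,
    MemLp G p m ∧
    MemLp (fun z => g1 z * xdOf d hd z ^ (1 - α)) p m ∧
    MemLp (fun z => g2 z * wtm d hd α z) p m ∧
    ∀ φ : Pt d → ℝ, IsTest d Ω φ →
      -∫ z in Ω, (μ (xdOf d hd z))⁻¹ * u z * tderiv' d φ z
        = -(∫ z in Ω, ∑ i, G z i * pderiv' d i φ z)
          + ∫ z in Ω, (μ (xdOf d hd z))⁻¹ * (g1 z + g2 z) * φ z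

/-- `u ∈ 𝓗^1_p(Ω, m)` with the homogeneous Dirichlet boundary condition on `{x_d = 0}`. -/
def MemH1BC (d : ℕ) (hd : 0 < d) (α : ℝ) (p : ℝ≥0∞) (Ω : Set (Pt d)) (m : Measure (Pt d))
    (μ : ℝ → ℝ) (u : Pt d → ℝ) (Du : Pt d → Spc d) : Prop :=
  MemW1 d hd α p m u Du ∧ HasWeakGrad d Ω u Du ∧ ApproxBC d hd α p m u Du ∧
    MemHm1 d hd α p Ω m μ u

/-- `u ∈ 𝓗^1_p(Ω, m)` (interior version, no boundary condition). -/
def MemH1I (d : ℕ) (hd : 0 < d) (α : ℝ) (p : ℝ≥0∞) (Ω : Set (Pt d)) (m : Measure (Pt d))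
    (μ : ℝ → ℝ) (u : Pt d → ℝ) (Du : Pt d → Spc d) : Prop :=
  MemW1 d hd α p m u Du ∧ HasWeakGrad d Ω u Du ∧ ApproxI d hd α p m u Du ∧
    MemHm1 d hd α p Ω m μ u

/-- `r(ρ, s) = max{ρ, s}^{α/2} ρ^{1−α/2}`. -/
def rad (α ρ s : ℝ) : ℝ := max ρ s ^ (α / 2) * ρ ^ (1 - α / 2)

/-- Parabolic cylinder `Q_ρ(z₀)`. -/
def Qc (d : ℕ) (hd : 0 < d) (α ρ : ℝ) (z0 : Pt d) : Set (Pt d) :=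
  Ioo (z0.1 - ρ ^ (2 - α)) z0.1 ×ˢ Metric.ball z0.2 (rad α ρ (xdOf d hd z0))

/-- Upper-half parabolic cylinder `Q_ρ^+(z₀)`. -/
def Qp (d : ℕ) (hd : 0 < d) (α ρ : ℝ) (z0 : Pt d) : Set (Pt d) :=
  Qc d hd α ρ z0 ∩ {z | 0 < xdOf d hd z}

/-- Centered cylinder `Q_ρ = (−ρ^{2−α}, 0) × B_ρ(0)`. -/
def Qstd (d : ℕ) (α ρ : ℝ) : Set (Pt d) :=
  Ioo (-(ρ ^ (2 - α))) 0 ×ˢ Metric.ball (0 : Spc d) ρ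

/-- Centered upper-half cylinder `Q_ρ^+`. -/
def QstdP (d : ℕ) (hd : 0 < d) (α ρ : ℝ) : Set (Pt d) :=
  Qstd d α ρ ∩ {z | 0 < xdOf d hd z}

/-- Half ball `B_ρ^+ ⊂ ℝ^d_+` centered at the origin. -/
def BhalfStd (d : ℕ) (hd : 0 < d) (ρ : ℝ) : Set (Spc d) :=
  Metric.ball (0 : Spc d) ρ ∩ {x | 0 < lastc d hd x}

/-- The frozen coefficients `[a_{ij}]`, `[c₀]` satisfy the ellipticity/boundedness bounds on
the interval `((s − r)_+, s + r)`. -/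
def LocCoefOK (d : ℕ) (ν : ℝ) (ab : Fin d → Fin d → ℝ → ℝ) (cb : ℝ → ℝ) (s r : ℝ) : Prop :=
  ∀ y ∈ Ioo (max (s - r) 0) (s + r),
    EllipticAt d ν (fun i j => ab i j y) ∧ ν ≤ cb y ∧ cb y ≤ ν⁻¹

/-- The partial mean oscillation of `(a, c₀)` against `(ab, cb)` on `Q_ρ^+(z)` is `< δ`. -/
def OscOK (d : ℕ) (hd : 0 < d) (α : ℝ) (a : Fin d → Fin d → Pt d → ℝ) (c0 : Pt d → ℝ)
    (ab : Fin d → Fin d → ℝ → ℝ) (cb : ℝ → ℝ) (ρ : ℝ) (z : Pt d) (δ : ℝ) : Prop :=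
  ∀ i j, (⨍ w in Qp d hd α ρ z, |a i j w - ab i j (xdOf d hd w)|)
    + (⨍ w in Qp d hd α ρ z, |c0 w - cb (xdOf d hd w)|) < δ

/-- Assumption (ρ₀, δ): partial VMO condition on the coefficients. -/
def AssumpVMO (d : ℕ) (hd : 0 < d) (ν α : ℝ) (T : EReal)
    (a : Fin d → Fin d → Pt d → ℝ) (c0 : Pt d → ℝ) (ρ0 δ : ℝ) : Prop :=
  ∀ ρ ∈ Ioo (0 : ℝ) ρ0, ∀ z ∈ closure (OmegaT d hd T),
    ∃ ab : Fin d → Fin d → ℝ → ℝ, ∃ cb : ℝ → ℝ,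
      LocCoefOK d ν ab cb (xdOf d hd z) (rad α ρ (xdOf d hd z)) ∧
        OscOK d hd α a c0 ab cb ρ z δ

/-- `L^∞` norm (in `ℝ≥0∞`) of a function on a set `Q`. -/
def supNorm (d : ℕ) {E : Type} [NormedAddCommGroup E] (Q : Set (Pt d)) (f : Pt d → E) : ℝ≥0∞ :=
  ⨆ z ∈ Q, (‖f z‖₊ : ℝ≥0∞)

/-- Hölder seminorm in the spatial variables (in `ℝ≥0∞`):
`[f]_{C^{0,β}(Q)} = sup {|f(t,x) − f(t,y)| / |x−y|^β}`. -/
def holSemi (d : ℕ) {E : Type} [NormedAddCommGroup E] (β : ℝ) (Q : Set (Pt d))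
    (f : Pt d → E) : ℝ≥0∞ :=
  ⨆ z ∈ Q, ⨆ w ∈ Q, ⨆ (_ : z.1 = w.1),
    ENNReal.ofReal (‖f z - f w‖ / ‖z.2 - w.2‖ ^ β)

/-- `C^{k,0}` norm: `∑_{i ≤ k} ‖∂_t^i f‖_{L^∞(Q)}`. -/
def normCk0 (d : ℕ) {E : Type} [NormedAddCommGroup E] [NormedSpace ℝ E]
    (k : ℕ) (Q : Set (Pt d)) (f : Pt d → E) : ℝ≥0∞ :=
  ∑ i ∈ Finset.range (k + 1), supNorm d Q (tderivIter d i f)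

/-- `C^{k,β}` norm: `‖f‖_{C^{k,0}(Q)} + ∑_{i ≤ k} [∂_t^i f]_{C^{0,β}(Q)}`. -/
def normCkHol (d : ℕ) {E : Type} [NormedAddCommGroup E] [NormedSpace ℝ E]
    (k : ℕ) (β : ℝ) (Q : Set (Pt d)) (f : Pt d → E) : ℝ≥0∞ :=
  normCk0 d k Q f + ∑ i ∈ Finset.range (k + 1), holSemi d β Q (tderivIter d i f)

/-- Weighted parabolic Hölder seminorm `[f]_{C^{β/2,β}_α(Q)}` with weight factor
`c = x_{0d}^{−α/2}` : `sup |f(s,x) − f(t,y)| / (c|x−y| + |t−s|^{1/2})^β`. -/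
def holSemiW (d : ℕ) {E : Type} [NormedAddCommGroup E] (c β : ℝ) (Q : Set (Pt d))
    (f : Pt d → E) : ℝ≥0∞ :=
  ⨆ z ∈ Q, ⨆ w ∈ Q,
    ENNReal.ofReal (‖f z - f w‖ / (c * ‖z.2 - w.2‖ + |z.1 - w.1| ^ ((1 : ℝ) / 2)) ^ β)

/-- The data function `g = x_d^{1−α}|f₁| + λ^{−1/2} x_d^{−α/2}|f₂|`. -/
def gfun (d : ℕ) (hd : 0 < d) (α lam : ℝ) (f1 f2 : Pt d → ℝ) (z : Pt d) : ℝ :=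
  xdOf d hd z ^ (1 - α) * |f1 z| + lam ^ (-(1 / 2) : ℝ) * (wtm d hd α z * |f2 z|)

/-- The main estimate `‖Du‖_{L_p(m)} + √λ ‖x_d^{−α/2} u‖_{L_p(m)} ≤ N(‖F‖_{L_p(m)} + ‖g‖_{L_p(m)})`. -/
def MainEst (d : ℕ) (hd : 0 < d) (α : ℝ) (p : ℝ≥0∞) (m : Measure (Pt d)) (N lam : ℝ)
    (F : Pt d → Spc d) (g : Pt d → ℝ) (u : Pt d → ℝ) (Du : Pt d → Spc d) : Prop :=
  eLpNorm Du p m + ENNReal.ofReal (Real.sqrt lam) * eLpNorm (fun z => u z * wtm d hd α z) p m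
    ≤ ENNReal.ofReal N * (eLpNorm F p m + eLpNorm g p m)

/-- The quasi-metric `ϱ` on `Ω_∞ = ℝ × ℝ^d_+`. -/
def varrho (d : ℕ) (hd : 0 < d) (α : ℝ) (z w : Pt d) : ℝ :=
  |z.1 - w.1| ^ (1 / (2 - α)) +
    min ‖z.2 - w.2‖
      (‖z.2 - w.2‖ ^ (2 / (2 - α)) * min (xdOf d hd z) (xdOf d hd w) ^ (-(α / (2 - α))))

/-!
With `γ = α/(2-α)`, `r = |x - y|` and `m = min{x_d, y_d}`, the spatial part of `ϱ` is
`r^{1+γ} / max{m, r}^γ`. It is increasing in `r`, and since `|x_d - y_d| ≤ r` it changes by at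
most the factor `3^γ` when `m` is replaced by `min{x_d, v_d}` for a point `v` with
`|x - v| ≥ r/2`. Choosing the longer of the two legs `|x - v|`, `|v - y|` gives the
quasi-triangle inequality for the spatial part; for the time part `|t - s|^{1/(2-α)}` it is
the elementary `(a + b)^p ≤ 2^p (a^p + b^p)`.
-/

lemma Real.add_rpow_le_two_rpow_mul_rpow_add_rpow {p a b : ℝ} (ha : 0 ≤ a) (hb : 0 ≤ b)
    (hp : 0 ≤ p) : (a + b) ^ p ≤ 2 ^ p * (a ^ p + b ^ p) := calc
  (a + b) ^ p ≤ (2 * max a b) ^ p := by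
    rw [two_mul]; gcongr <;> [exact le_max_left a b; exact le_max_right a b]
  _ = 2 ^ p * max (a ^ p) (b ^ p) := by
    rw [Real.mul_rpow zero_le_two (ha.trans (le_max_left a b)), Real.rpow_max ha hb hp]
  _ ≤ 2 ^ p * (a ^ p + b ^ p) := by
    gcongr; exact max_le_add_of_nonneg (Real.rpow_nonneg ha p) (Real.rpow_nonneg hb p)

lemma abs_sub_rpow_le {p : ℝ} (hp : 0 ≤ p) (t u s : ℝ) :
    |t - s| ^ p ≤ 2 ^ p * (|t - u| ^ p + |u - s| ^ p) :=
  (Real.rpow_le_rpow (abs_nonneg _) (abs_sub_le t u s) hp).trans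
    (Real.add_rpow_le_two_rpow_mul_rpow_add_rpow (abs_nonneg _) (abs_nonneg _) hp)

def spatialGauge (γ m r : ℝ) : ℝ := r ^ (1 + γ) / max m r ^ γ

section spatialGauge

variable {γ m m' r : ℝ}

lemma min_rpow_eq_spatialGauge (hγ : 0 ≤ γ) (hm : 0 < m) (hr : 0 ≤ r) :
    min r (r ^ (1 + γ) * m ^ (-γ)) = spatialGauge γ m r := by
  rcases hr.eq_or_lt with rfl | hr
  · simp [spatialGauge, Real.zero_rpow (by positivity : 1 + γ ≠ 0)]
  have hpow : r ^ (1 + γ) = r * r ^ γ := by rw [Real.rpow_add hr, Real.rpow_one]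
  have hprod : r ^ (1 + γ) * m ^ (-γ) = r * (r / m) ^ γ := by
    rw [hpow, Real.rpow_neg hm.le, Real.div_rpow hr.le hm.le]; ring
  rw [spatialGauge, hprod]
  rcases le_total m r with h | h
  · rw [max_eq_right h, hpow, mul_div_assoc, div_self (Real.rpow_pos_of_pos hr γ).ne', mul_one]
    exact min_eq_left (le_mul_of_one_le_right hr.le (Real.one_le_rpow ((one_le_div hm).2 h) hγ))
  · have hle : r * (r / m) ^ γ ≤ r := mul_le_of_le_one_right hr.le
      (Real.rpow_le_one (div_nonneg hr.le hm.le) ((div_le_one hm).2 h) hγ)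
    rw [max_eq_left h, min_eq_right hle, ← hprod, Real.rpow_neg hm.le, div_eq_mul_inv]

lemma spatialGauge_nonneg (hr : 0 ≤ r) : 0 ≤ spatialGauge γ m r :=
  div_nonneg (Real.rpow_nonneg hr _) (Real.rpow_nonneg (hr.trans (le_max_right m r)) _)

lemma spatialGauge_eq_zero_iff (hγ : 0 ≤ γ) (hm : 0 < m) (hr : 0 ≤ r) :
    spatialGauge γ m r = 0 ↔ r = 0 := by
  have hden : max m r ^ γ ≠ 0 := (Real.rpow_pos_of_pos (hm.trans_le (le_max_left m r)) γ).ne'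
  rw [spatialGauge, div_eq_zero_iff, or_iff_left hden, Real.rpow_eq_zero hr (by positivity)]

lemma spatialGauge_mono (hγ : 0 ≤ γ) (hm : 0 < m) (hr : 0 ≤ r) {r' : ℝ} (hrr' : r ≤ r') :
    spatialGauge γ m r ≤ spatialGauge γ m r' := by
  rw [← min_rpow_eq_spatialGauge hγ hm hr, ← min_rpow_eq_spatialGauge hγ hm (hr.trans hrr')]
  gcongr

lemma spatialGauge_mul_le (hγ : 0 ≤ γ) (hm : 0 < m) (hr : 0 ≤ r) {k : ℝ} (hk : 1 ≤ k) :
    spatialGauge γ m (k * r) ≤ k ^ (1 + γ) * spatialGauge γ m r := by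
  rw [spatialGauge, spatialGauge, Real.mul_rpow (by linarith) hr, mul_div_assoc]
  gcongr
  exact le_mul_of_one_le_left hr hk

lemma spatialGauge_le_of_le_add (hγ : 0 ≤ γ) (hm : 0 < m) (hm' : 0 < m') (hr : 0 ≤ r) {k : ℝ}
    (hk : 0 ≤ k) (h : m' ≤ m + k * r) :
    spatialGauge γ m r ≤ (1 + k) ^ γ * spatialGauge γ m' r := by
  have hM : 0 < max m r := hm.trans_le (le_max_left m r)
  have hM' : max m' r ≤ (1 + k) * max m r := by
    refine max_le (h.trans ?_) ?_ <;> nlinarith [le_max_left m r, le_max_right m r]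
  rw [spatialGauge, spatialGauge, mul_div_assoc', div_le_div_iff₀ (Real.rpow_pos_of_pos hM γ)
    (Real.rpow_pos_of_pos (hm'.trans_le (le_max_left m' r)) γ)]
  calc r ^ (1 + γ) * max m' r ^ γ ≤ r ^ (1 + γ) * ((1 + k) * max m r) ^ γ := by gcongr
    _ = (1 + k) ^ γ * r ^ (1 + γ) * max m r ^ γ := by
        rw [Real.mul_rpow (by linarith) hM.le]; ring

lemma spatialGauge_le_of_le_two_mul (hγ : 0 ≤ γ) (hm : 0 < m) (hm' : 0 < m') {a b : ℝ}
    (ha : 0 ≤ a) (hab : a ≤ 2 * b) (h : m' ≤ m + a) :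
    spatialGauge γ m a ≤ 2 ^ (1 + γ) * 3 ^ γ * spatialGauge γ m' b := by
  have hb : 0 ≤ b := by linarith
  calc spatialGauge γ m a ≤ spatialGauge γ m (2 * b) := spatialGauge_mono hγ hm ha hab
    _ ≤ 2 ^ (1 + γ) * spatialGauge γ m b := spatialGauge_mul_le hγ hm hb one_le_two
    _ ≤ 2 ^ (1 + γ) * ((1 + 2) ^ γ * spatialGauge γ m' b) := by
        gcongr; exact spatialGauge_le_of_le_add hγ hm hm' hb zero_le_two (by linarith)
    _ = 2 ^ (1 + γ) * 3 ^ γ * spatialGauge γ m' b := by norm_num [mul_assoc]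

theorem spatialGauge_quasi_triangle (hγ : 0 ≤ γ) {p q s a b c : ℝ} (hp : 0 < p) (hq : 0 < q)
    (hs : 0 < s) (ha : 0 ≤ a) (hb : 0 ≤ b) (hc : 0 ≤ c) (habc : a ≤ b + c) (hpq : |p - q| ≤ a) :
    spatialGauge γ (min p q) a ≤
      2 ^ (1 + γ) * 3 ^ γ * (spatialGauge γ (min p s) b + spatialGauge γ (min s q) c) := by
  have hmax : max p q ≤ min p q + a := by linarith [max_sub_min_eq_abs' p q]
  have hmin : 0 < min p q := lt_min hp hq
  have hC : (0 : ℝ) ≤ 2 ^ (1 + γ) * 3 ^ γ := by positivity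
  have hb' := mul_nonneg hC (spatialGauge_nonneg (γ := γ) (m := min p s) hb)
  have hc' := mul_nonneg hC (spatialGauge_nonneg (γ := γ) (m := min s q) hc)
  rw [mul_add]
  rcases le_total c b with hcb | hbc
  · have := spatialGauge_le_of_le_two_mul hγ hmin (lt_min hp hs) ha (b := b) (by linarith)
      (by linarith [min_le_left p s, le_max_left p q])
    linarith
  · have := spatialGauge_le_of_le_two_mul hγ hmin (lt_min hs hq) ha (b := c) (by linarith)
      (by linarith [min_le_right s q, le_max_right p q])
    linarith

end spatialGauge

section varrho

variable {d : ℕ} {hd : 0 < d} {α : ℝ} {z w v : Pt d}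

lemma abs_xdOf_sub_le (z w : Pt d) : |xdOf d hd z - xdOf d hd w| ≤ ‖z.2 - w.2‖ := by
  simpa [xdOf, lastc] using PiLp.norm_apply_le (z.2 - w.2) ⟨d - 1, by omega⟩

lemma varrho_eq_spatialGauge (hα0 : 0 ≤ α) (hα2 : α < 2) (hz : 0 < xdOf d hd z)
    (hw : 0 < xdOf d hd w) :
    varrho d hd α z w = |z.1 - w.1| ^ (1 / (2 - α)) +
      spatialGauge (α / (2 - α)) (min (xdOf d hd z) (xdOf d hd w)) ‖z.2 - w.2‖ := by
  have hexp : 2 / (2 - α) = 1 + α / (2 - α) := by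
    rw [one_add_div (sub_pos.2 hα2).ne', sub_add_cancel]
  rw [varrho, hexp, min_rpow_eq_spatialGauge (by bound) (lt_min hz hw) (norm_nonneg _)]

theorem varrho_le_mul_add (hα0 : 0 ≤ α) (hα2 : α < 2) (hz : 0 < xdOf d hd z)
    (hw : 0 < xdOf d hd w) (hv : 0 < xdOf d hd v) :
    varrho d hd α z w ≤ (2 ^ (1 / (2 - α)) + 2 ^ (1 + α / (2 - α)) * 3 ^ (α / (2 - α))) *
      (varrho d hd α z v + varrho d hd α v w) := by
  have hγ : 0 ≤ α / (2 - α) := by bound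
  have hβ : 0 ≤ 1 / (2 - α) := by bound
  rw [varrho_eq_spatialGauge hα0 hα2 hz hw, varrho_eq_spatialGauge hα0 hα2 hz hv,
    varrho_eq_spatialGauge hα0 hα2 hv hw]
  have htime := abs_sub_rpow_le hβ z.1 v.1 w.1
  have hspace := spatialGauge_quasi_triangle hγ hz hw hv (norm_nonneg _) (norm_nonneg _)
    (norm_nonneg _) (norm_sub_le_norm_sub_add_norm_sub z.2 v.2 w.2) (abs_xdOf_sub_le z w)
  set A : ℝ := 2 ^ (1 / (2 - α))
  set B : ℝ := 2 ^ (1 + α / (2 - α)) * 3 ^ (α / (2 - α))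
  calc _ ≤ A * (_ + _) + B * (_ + _) := add_le_add htime hspace
    _ ≤ (A + B) * (_ + _) + (A + B) * (_ + _) := by
      gcongr
      · exact le_add_of_nonneg_right (by positivity)
      · exact add_nonneg (spatialGauge_nonneg (norm_nonneg _))
          (spatialGauge_nonneg (norm_nonneg _))
      · exact le_add_of_nonneg_left (by positivity)
    _ = _ := by ring

theorem varrho_eq_zero_iff (hα0 : 0 ≤ α) (hα2 : α < 2) (hz : 0 < xdOf d hd z)
    (hw : 0 < xdOf d hd w) : varrho d hd α z w = 0 ↔ z = w := by
  rw [varrho_eq_spatialGauge hα0 hα2 hz hw,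
    add_eq_zero_iff_of_nonneg (Real.rpow_nonneg (abs_nonneg _) _)
      (spatialGauge_nonneg (norm_nonneg _)),
    Real.rpow_eq_zero (abs_nonneg _) (one_div_pos.2 (sub_pos.2 hα2)).ne', abs_eq_zero,
    sub_eq_zero, spatialGauge_eq_zero_iff (by bound) (lt_min hz hw) (norm_nonneg _),
    norm_eq_zero, sub_eq_zero, Prod.ext_iff]

end varrho

/-- `ϱ` is a quasi-metric on `Ω_∞`. -/
theorem stmt19 (d : ℕ) (hd : 0 < d) (α : ℝ) (hα : α ∈ Ioo (0 : ℝ) 2) :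
    ∃ K1 : ℝ, 0 < K1 ∧
      (∀ z ∈ OmegaT d hd ⊤, ∀ w ∈ OmegaT d hd ⊤, ∀ v ∈ OmegaT d hd ⊤,
        varrho d hd α z w ≤ K1 * (varrho d hd α z v + varrho d hd α v w)) ∧
      (∀ z ∈ OmegaT d hd ⊤, ∀ w ∈ OmegaT d hd ⊤, (varrho d hd α z w = 0 ↔ z = w)) := by
  obtain ⟨hα0, hα2⟩ := hα
  exact ⟨_, by positivity, fun z hz w hw v hv => varrho_le_mul_add hα0.le hα2 hz.2 hw.2 hv.2,
    fun z hz w hw => varrho_eq_zero_iff hα0.le hα2 hz.2 hw.2⟩
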